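/- arXiv:0906.4595 — 4 statements merged into one kernel-verified Lean document; each statement's English description precedes it below -/
import Mathlib

section
/- Let G be a finite abelian group, F an algebraically closed field of characteristic zero, and R = Mₙ(F) a G-graded algebra with a fine grading (dim R^(t) = 1 for all t in the support T). Then T = Supp R is a subgroup of G, |T| = n², and there exist basis elements X_t ∈ R^(t) (t ∈ T) and a map α : T × T → F× such that X_t X_s = α(t,s) X_{ts} for all t, s ∈ T; moreover α is a 2-cocycle, so R is isomorphic to the twisted group algebra F^α T. -/
/-- let `G` be a finite abelian group, `F` algebraically closed of
characteristic zero, and `R = Mₙ(F)` with a fine `G`-grading. Then the support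
`T` is a subgroup of `G` of order `n²`, and one can choose basis elements
`X_t ∈ R^(t)` (`t ∈ T`) and nonzero scalars `α(t,s)` with
`X_t X_s = α(t,s) X_{ts}`; moreover `α` is a 2-cocycle, and the `X_t` form a
basis of `R`, so `R ≅ F^α T`, a twisted group algebra. -/
theorem fine_grading_twisted_group_algebra
    (F : Type*) [Field F] [IsAlgClosed F] [CharZero F]
    (G : Type*) [CommGroup G] [Fintype G] [DecidableEq G]
    (n : ℕ) (hn : 0 < n)
    (ℛ : G → Submodule F (Matrix (Fin n) (Fin n) F))
    (hinternal : DirectSum.IsInternal ℛ)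
    (hmul : ∀ g h : G, ℛ g * ℛ h ≤ ℛ (g * h))
    (hfine : ∀ g : G, ℛ g ≠ ⊥ → Module.finrank F (ℛ g) = 1) :
    ∃ T : Subgroup G,
      ((T : Set G) = {g : G | ℛ g ≠ ⊥}) ∧
      Nat.card T = n ^ 2 ∧
      ∃ (X : T → Matrix (Fin n) (Fin n) F) (α : T → T → Fˣ),
        (∀ t : T, X t ∈ ℛ (t : G) ∧ X t ≠ 0) ∧
        (∀ t s : T, X t * X s = (α t s : F) • X (t * s)) ∧
        (∀ t s u : T, α t s * α (t * s) u = α s u * α t (s * u)) ∧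
        LinearIndependent F X ∧
        Submodule.span F (Set.range X) = ⊤ := by
  classical
  haveI : Nonempty (Fin n) := ⟨⟨0, hn⟩⟩
  set R := Matrix (Fin n) (Fin n) F with hR
  have hind := hinternal.submodule_iSupIndep
  have htop := hinternal.submodule_iSup_eq_top
  -- decomposition of 1
  obtain ⟨f, hfmem, hfsum⟩ :=
    (Submodule.mem_iSup_iff_exists_finsupp ℛ (1 : R)).mp (htop ▸ Submodule.mem_top)
  rw [Finsupp.sum] at hfsum
  -- f 1 is a right identity on homogeneous elements
  have hre : ∀ (g : G) (x : R), x ∈ ℛ g → x * f 1 = x := by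
    intro g x hx
    have hxf1 : x * f 1 ∈ ℛ g := by
      have := hmul g 1 (Submodule.mul_mem_mul hx (hfmem 1))
      rwa [mul_one] at this
    have hxe : x = ∑ h ∈ f.support, x * f h := by
      conv_lhs => rw [← mul_one x, ← hfsum]
      rw [Finset.mul_sum]
    have hsplit : x - x * f 1 = ∑ h ∈ f.support.erase 1, x * f h := by
      by_cases h1 : (1 : G) ∈ f.support
      · have h2 := Finset.add_sum_erase f.support (fun h => x * f h) h1
        have h3 : x = x * f 1 + ∑ h ∈ f.support.erase 1, x * f h := hxe.trans h2.symm
        exact sub_eq_iff_eq_add'.mpr h3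
      · have hf1 : f 1 = 0 := Finsupp.notMem_support_iff.mp h1
        rw [Finset.erase_eq_of_notMem h1, hf1, mul_zero, sub_zero]
        exact hxe
    have hmem2 : x - x * f 1 ∈ ⨆ (k) (_ : k ≠ g), ℛ k := by
      rw [hsplit]
      refine Submodule.sum_mem _ ?_
      intro h hh
      have hne : g * h ≠ g := by
        have h1 : h ≠ 1 := Finset.ne_of_mem_erase hh
        simpa [mul_eq_left] using h1
      have hm : x * f h ∈ ℛ (g * h) := hmul g h (Submodule.mul_mem_mul hx (hfmem h))
      exact Submodule.mem_iSup_of_mem (g * h) (Submodule.mem_iSup_of_mem hne hm)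
    have hz : x - x * f 1 = 0 :=
      (Submodule.disjoint_def.mp (hind g)) _ (sub_mem hx hxf1) hmem2
    exact (sub_eq_zero.mp hz).symm
  -- hence f 1 = 1 and 1 ∈ ℛ 1
  have hone : (1 : R) ∈ ℛ 1 := by
    have hp : ∀ x : R, x * f 1 = x := by
      intro x
      have hx : x ∈ ⨆ g, ℛ g := htop ▸ Submodule.mem_top
      refine Submodule.iSup_induction ℛ (motive := fun x => x * f 1 = x) hx hre ?_ ?_
      · show (0 : R) * f 1 = 0; rw [zero_mul]
      · intro a b ha hb; show (a + b) * f 1 = a + b; rw [add_mul, ha, hb]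
    have h1 : f 1 = 1 := by have := hp 1; rwa [one_mul] at this
    rw [← h1]; exact hfmem 1
  -- each nonzero homogeneous space is the span of any of its nonzero elements
  have hspan : ∀ (g : G) (v : R), v ∈ ℛ g → v ≠ 0 → ℛ g = Submodule.span F {v} := by
    intro g v hv hv0
    have hle : Submodule.span F {v} ≤ ℛ g := by
      rw [Submodule.span_le]; simpa using hv
    have hnb : ℛ g ≠ ⊥ := (Submodule.ne_bot_iff _).mpr ⟨v, hv, hv0⟩
    have h1 : Module.finrank F (ℛ g) ≤ Module.finrank F (Submodule.span F {v}) := by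
      rw [hfine g hnb, finrank_span_singleton hv0]
    exact (Submodule.eq_of_le_of_finrank_le hle h1).symm
  -- every nonzero homogeneous element is invertible
  have hinv : ∀ (t : G) (x : R), x ∈ ℛ t → x ≠ 0 → IsUnit x := by
    intro t x hx hx0
    set S : Set R := {y | ∃ (g h : G) (a b : R), a ∈ ℛ g ∧ b ∈ ℛ h ∧ y = a * x * b} with hS
    set W : Submodule F R := Submodule.span F S with hW
    -- W is closed under left multiplication
    have hWl : ∀ (c w : R), w ∈ W → c * w ∈ W := by
      have hWl0 : ∀ (cg : G) (c : R), c ∈ ℛ cg → ∀ w ∈ W, c * w ∈ W := by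
        intro cg c hc w hw
        refine Submodule.span_induction (p := fun w _ => c * w ∈ W) ?_ ?_ ?_ ?_ hw
        · rintro y ⟨g, h, a, b, ha, hb, rfl⟩
          show c * (a * x * b) ∈ W
          refine Submodule.subset_span ⟨cg * g, h, c * a, b,
            hmul cg g (Submodule.mul_mem_mul hc ha), hb, ?_⟩
          rw [← mul_assoc, ← mul_assoc]
        · show c * (0 : R) ∈ W; rw [mul_zero]; exact zero_mem _
        · intro a b _ _ hpa hpb
          show c * (a + b) ∈ W; rw [mul_add]; exact add_mem hpa hpb
        · intro r a _ hpa
          show c * (r • a) ∈ W; rw [mul_smul_comm]; exact Submodule.smul_mem _ _ hpa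
      intro c w hw
      have hc : c ∈ ⨆ g, ℛ g := htop ▸ Submodule.mem_top
      refine Submodule.iSup_induction ℛ (motive := fun c => c * w ∈ W) hc
        (fun g c hcg => hWl0 g c hcg w hw) ?_ ?_
      · show (0 : R) * w ∈ W; rw [zero_mul]; exact zero_mem _
      · intro a b ha hb; show (a + b) * w ∈ W; rw [add_mul]; exact add_mem ha hb
    have hWr : ∀ (c w : R), w ∈ W → w * c ∈ W := by
      have hWr0 : ∀ (cg : G) (c : R), c ∈ ℛ cg → ∀ w ∈ W, w * c ∈ W := by
        intro cg c hc w hw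
        refine Submodule.span_induction (p := fun w _ => w * c ∈ W) ?_ ?_ ?_ ?_ hw
        · rintro y ⟨g, h, a, b, ha, hb, rfl⟩
          show (a * x * b) * c ∈ W
          refine Submodule.subset_span ⟨g, h * cg, a, b * c, ha,
            hmul h cg (Submodule.mul_mem_mul hb hc), ?_⟩
          rw [mul_assoc]
        · show (0 : R) * c ∈ W; rw [zero_mul]; exact zero_mem _
        · intro a b _ _ hpa hpb
          show (a + b) * c ∈ W; rw [add_mul]; exact add_mem hpa hpb
        · intro r a _ hpa
          show (r • a) * c ∈ W; rw [smul_mul_assoc]; exact Submodule.smul_mem _ _ hpa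
      intro c w hw
      have hc : c ∈ ⨆ g, ℛ g := htop ▸ Submodule.mem_top
      refine Submodule.iSup_induction ℛ (motive := fun c => w * c ∈ W) hc
        (fun g c hcg => hWr0 g c hcg w hw) ?_ ?_
      · show w * (0 : R) ∈ W; rw [mul_zero]; exact zero_mem _
      · intro a b ha hb; show w * (a + b) ∈ W; rw [mul_add]; exact add_mem ha hb
    have hxW : x ∈ W := by
      refine Submodule.subset_span ⟨1, 1, 1, 1, hone, hone, ?_⟩
      rw [one_mul, mul_one]
    -- W = ⊤ since Mₙ(F) is simple
    obtain ⟨j, k, hjk⟩ : ∃ j k, x j k ≠ 0 := by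
      by_contra hcon
      push_neg at hcon
      exact hx0 (by ext a b; exact hcon a b)
    have hWtop : W = ⊤ := by
      have hstd : ∀ i l : Fin n, Matrix.single i l (1 : F) ∈ W := by
        intro i l
        have hkey : Matrix.single i j (1 : F) * x * Matrix.single k l (1 : F)
            = x j k • Matrix.single i l (1 : F) := by
          ext a b
          by_cases hb : b = l
          · subst hb
            rw [Matrix.mul_single_apply_same]
            by_cases ha : a = i
            · subst ha
              rw [Matrix.single_mul_apply_same]
              simp
            · rw [Matrix.single_mul_apply_of_ne (h := ha)]
              have h0 : Matrix.single i b (1 : F) a b = 0 :=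
                Matrix.single_apply_of_row_ne (fun h => ha h.symm) _ _ _
              simp [h0]
          · rw [Matrix.mul_single_apply_of_ne (hbj := hb)]
            have h0 : Matrix.single i l (1 : F) a b = 0 :=
              Matrix.single_apply_of_col_ne _ _ (fun h => hb h.symm) _
            simp [h0]
        have hmemW : Matrix.single i j (1 : F) * x * Matrix.single k l (1 : F)
            ∈ W := hWr _ _ (hWl _ _ hxW)
        rw [hkey] at hmemW
        have := Submodule.smul_mem W (x j k)⁻¹ hmemW
        rwa [inv_smul_smul₀ hjk] at this
      rw [eq_top_iff]
      intro M _
      rw [Matrix.matrix_eq_sum_single M]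
      refine Submodule.sum_mem _ fun i _ => Submodule.sum_mem _ fun l _ => ?_
      have hsm : Matrix.single i l (M i l) = M i l • Matrix.single i l (1 : F) := by
        rw [Matrix.smul_single, smul_eq_mul, mul_one]
      rw [hsm]
      exact Submodule.smul_mem _ _ (hstd i l)
    -- extract a homogeneous pair a, b with a * x * b a nonzero multiple of 1
    have hex : ∃ (g h : G) (a b : R), a ∈ ℛ g ∧ b ∈ ℛ h ∧ g * t * h = 1 ∧ a * x * b ≠ 0 := by
      by_contra hcon
      push_neg at hcon
      have hle : W ≤ ⨆ (k') (_ : k' ≠ (1 : G)), ℛ k' := by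
        rw [hW, Submodule.span_le]
        rintro y ⟨g, h, a, b, ha, hb, rfl⟩
        by_cases hgh : g * t * h = 1
        · rw [hcon g h a b ha hb hgh]
          exact zero_mem _
        · have hm : a * x * b ∈ ℛ (g * t * h) :=
            hmul (g * t) h (Submodule.mul_mem_mul (hmul g t (Submodule.mul_mem_mul ha hx)) hb)
          exact Submodule.mem_iSup_of_mem (g * t * h) (Submodule.mem_iSup_of_mem hgh hm)
      have h1W : (1 : R) ∈ W := hWtop ▸ Submodule.mem_top
      have h1z : (1 : R) = 0 :=
        (Submodule.disjoint_def.mp (hind 1)) _ hone (hle h1W)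
      exact one_ne_zero h1z
    obtain ⟨g, h, a, b, ha, hb, hgth, hne0⟩ := hex
    have haxb : a * x * b ∈ ℛ 1 := by
      have := hmul (g * t) h (Submodule.mul_mem_mul (hmul g t (Submodule.mul_mem_mul ha hx)) hb)
      rwa [hgth] at this
    have h1span : ℛ 1 = Submodule.span F {(1 : R)} := hspan 1 1 hone one_ne_zero
    rw [h1span, Submodule.mem_span_singleton] at haxb
    obtain ⟨lam, hlam⟩ := haxb
    have hlam0 : lam ≠ 0 := by
      rintro rfl
      rw [zero_smul] at hlam
      exact hne0 hlam.symm
    have hleft : (lam⁻¹ • a) * (x * b) = 1 := by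
      rw [smul_mul_assoc, ← mul_assoc, ← hlam, smul_smul, inv_mul_cancel₀ hlam0, one_smul]
    have hright : (x * b) * (lam⁻¹ • a) = 1 := mul_eq_one_comm.mp hleft
    have hxinv : x * (b * (lam⁻¹ • a)) = 1 := by rw [← mul_assoc]; exact hright
    have hxinv' : (b * (lam⁻¹ • a)) * x = 1 := mul_eq_one_comm.mp hxinv
    exact ⟨⟨x, b * (lam⁻¹ • a), hxinv, hxinv'⟩, rfl⟩
  -- the support is a subgroup
  have hmulmem : ∀ {g h : G}, ℛ g ≠ ⊥ → ℛ h ≠ ⊥ → ℛ (g * h) ≠ ⊥ := by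
    intro g h hg hh
    obtain ⟨xg, hxg, hxg0⟩ := Submodule.exists_mem_ne_zero_of_ne_bot hg
    obtain ⟨xh, hxh, hxh0⟩ := Submodule.exists_mem_ne_zero_of_ne_bot hh
    have hm : xg * xh ∈ ℛ (g * h) := hmul g h (Submodule.mul_mem_mul hxg hxh)
    have hne : xg * xh ≠ 0 := ((hinv g xg hxg hxg0).mul (hinv h xh hxh hxh0)).ne_zero
    exact (Submodule.ne_bot_iff _).mpr ⟨xg * xh, hm, hne⟩
  have h1mem : ℛ (1 : G) ≠ ⊥ := (Submodule.ne_bot_iff _).mpr ⟨1, hone, one_ne_zero⟩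
  have hpow : ∀ (g : G), ℛ g ≠ ⊥ → ∀ m : ℕ, ℛ (g ^ (m + 1)) ≠ ⊥ := by
    intro g hg m
    induction m with
    | zero => simpa using hg
    | succ m ih => rw [pow_succ]; exact hmulmem ih hg
  have hinvmem : ∀ {g : G}, ℛ g ≠ ⊥ → ℛ g⁻¹ ≠ ⊥ := by
    intro g hg
    by_cases hg1 : g = 1
    · subst hg1; simpa using h1mem
    · have hord : 2 ≤ orderOf g := by
        have h1 : orderOf g ≠ 0 := (orderOf_pos g).ne'
        have h2 : orderOf g ≠ 1 := fun hcon => hg1 (orderOf_eq_one_iff.mp hcon)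
        omega
      have hrw : g⁻¹ = g ^ (orderOf g - 1) := by
        rw [eq_comm, eq_inv_iff_mul_eq_one, ← pow_succ, Nat.sub_add_cancel (by omega),
          pow_orderOf_eq_one]
      rw [hrw]
      obtain ⟨m, hm⟩ : ∃ m, orderOf g - 1 = m + 1 := ⟨orderOf g - 2, by omega⟩
      rw [hm]
      exact hpow g hg m
  refine ⟨{ carrier := {g : G | ℛ g ≠ ⊥}
            mul_mem' := fun hg hh => hmulmem hg hh
            one_mem' := h1mem
            inv_mem' := fun hg => hinvmem hg }, rfl, ?_, ?_⟩
  -- cardinality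
  · have hdim1 : Module.finrank F R = n ^ 2 := by
      have h : Module.finrank F (Matrix (Fin n) (Fin n) F) = n ^ 2 := by
        rw [Module.finrank_matrix, Module.finrank_self, Fintype.card_fin, mul_one, sq]
      exact h
    have e := LinearEquiv.ofBijective (DirectSum.coeLinearMap ℛ) hinternal
    have hdim2 : Module.finrank F R = ∑ g : G, Module.finrank F (ℛ g) := by
      rw [← e.finrank_eq, Module.finrank_directSum]
    have hcard : Nat.card {g : G // ℛ g ≠ ⊥} = ∑ g : G, Module.finrank F (ℛ g) := by
      rw [Nat.card_eq_fintype_card, Fintype.card_subtype, Finset.card_filter]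
      refine Finset.sum_congr rfl fun g _ => ?_
      by_cases hg : ℛ g ≠ ⊥
      · rw [if_pos hg, hfine g hg]
      · rw [if_neg hg]
        push_neg at hg
        rw [hg]
        exact (finrank_bot F R).symm
    have hfinal : Nat.card {g : G // ℛ g ≠ ⊥} = n ^ 2 := by rw [hcard, ← hdim2, hdim1]
    rw [← hfinal]
    exact Nat.card_congr (Equiv.subtypeEquivRight fun g => Iff.rfl)
  -- construction of X and α
  · have hchoice : ∀ t : {g : G // ℛ g ≠ ⊥}, ∃ x : R, x ∈ ℛ (t : G) ∧ x ≠ 0 := fun t =>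
      Submodule.exists_mem_ne_zero_of_ne_bot t.2
    choose X0 hXmem0 hXne0 using hchoice
    set Tsub : Subgroup G :=
      { carrier := {g : G | ℛ g ≠ ⊥}
        mul_mem' := fun hg hh => hmulmem hg hh
        one_mem' := h1mem
        inv_mem' := fun hg => hinvmem hg } with hTsub
    have hmemT : ∀ t : Tsub, ℛ (t : G) ≠ ⊥ := fun t => t.2
    set X : Tsub → R := fun t => X0 ⟨(t : G), hmemT t⟩ with hX
    have hXmem : ∀ t : Tsub, X t ∈ ℛ (t : G) := fun t => hXmem0 _
    have hXne : ∀ t : Tsub, X t ≠ 0 := fun t => hXne0 _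
    have hXunit : ∀ t : Tsub, IsUnit (X t) := fun t => hinv _ _ (hXmem t) (hXne t)
    have hαex : ∀ t s : Tsub, ∃ c : F, c ≠ 0 ∧ X t * X s = c • X (t * s) := by
      intro t s
      have hm : X t * X s ∈ ℛ ((t * s : Tsub) : G) := by
        rw [Subgroup.coe_mul]
        exact hmul _ _ (Submodule.mul_mem_mul (hXmem t) (hXmem s))
      have hsp := hspan _ _ (hXmem (t * s)) (hXne (t * s))
      rw [hsp, Submodule.mem_span_singleton] at hm
      obtain ⟨c, hc⟩ := hm
      refine ⟨c, ?_, hc.symm⟩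
      rintro rfl
      rw [zero_smul] at hc
      exact ((hXunit t).mul (hXunit s)).ne_zero hc.symm
    choose c hc0 hXc using hαex
    refine ⟨X, fun t s => Units.mk0 (c t s) (hc0 t s), fun t => ⟨hXmem t, hXne t⟩,
      fun t s => hXc t s, ?_, ?_, ?_⟩
    · intro t s u
      have hassoc : (X t * X s) * X u = X t * (X s * X u) := mul_assoc _ _ _
      rw [hXc t s, smul_mul_assoc, hXc (t * s) u, hXc s u, mul_smul_comm, hXc t (s * u),
        smul_smul, smul_smul, mul_assoc t s u] at hassoc
      have h3 : c t s * c (t * s) u = c s u * c t (s * u) :=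
        smul_left_injective F (M := R) (hXne (t * (s * u))) hassoc
      ext
      simpa using h3
    · exact iSupIndep.linearIndependent _ (hind.comp Subtype.val_injective)
        (fun t => hXmem t) (fun t => hXne t)
    · rw [eq_top_iff, ← htop]
      refine iSup_le fun g => ?_
      by_cases hg : ℛ g ≠ ⊥
      · have hsp := hspan g (X ⟨g, hg⟩) (hXmem ⟨g, hg⟩) (hXne ⟨g, hg⟩)
        rw [hsp]
        refine Submodule.span_le.mpr ?_
        rintro y hy
        rw [Set.mem_singleton_iff] at hy
        subst hy
        exact Submodule.subset_span ⟨⟨g, hg⟩, rfl⟩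
      · push_neg at hg
        rw [hg]
        exact bot_le
end

section
/- Let C ≅ M_k(F) be a graded subalgebra, with elementary G-grading given by (g₁,…,g_k), of R = End(V) for a finite-dimensional G-graded space V with the induced elementary grading. Then V decomposes as a direct sum of C-invariant graded subspaces V = V₁ ⊕ ⋯ ⊕ V_m ⊕ V₀, where each V_j (1 ≤ j ≤ m) has dimension k and is a faithful irreducible C-module, and C·V₀ = 0. -/
open Submodule

/-- The "matrix unit" endomorphism `E_{ij}` w.r.t. a basis `b`. -/
noncomputable def matrixUnitEnd {F V : Type*} [Field F] [AddCommGroup V] [Module F V]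
    {n : ℕ} (b : Module.Basis (Fin n) F V) (i j : Fin n) : Module.End F V :=
  b.constr F fun l => if l = j then b i else 0

/-- The elementary grading on `End(V)` induced from a graded basis. -/
noncomputable def endElemComp {F V : Type*} [Field F] [AddCommGroup V] [Module F V]
    {n : ℕ} {G : Type*} [Group G] (b : Module.Basis (Fin n) F V) (τ : Fin n → G) (g : G) :
    Submodule F (Module.End F V) :=
  Submodule.span F
    {φ | ∃ i j : Fin n, (τ i)⁻¹ * τ j = g ∧ φ = matrixUnitEnd b i j}

section Aux

variable {F V : Type*} [Field F] [AddCommGroup V] [Module F V]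
variable {G : Type*} [Group G] [DecidableEq G]

lemma aux_sum_eq_zero (𝒱 : G → Submodule F V) (hV : DirectSum.IsInternal 𝒱)
    (s : Finset G) (f : G → V) (hf : ∀ h ∈ s, f h ∈ 𝒱 h)
    (hsum : ∑ h ∈ s, f h = 0) : ∀ h ∈ s, f h = 0 := by
  intro h₀ hh₀
  have hadd : f h₀ + ∑ h ∈ s.erase h₀, f h = 0 := by
    rw [Finset.add_sum_erase s f hh₀, hsum]
  have hmem : f h₀ ∈ ⨆ (h) (_ : h ≠ h₀), 𝒱 h := by
    have h1 : f h₀ = -∑ h ∈ s.erase h₀, f h := eq_neg_of_add_eq_zero_left hadd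
    rw [h1]
    exact neg_mem (Submodule.sum_mem _ fun h hh =>
      Submodule.mem_iSup_of_mem h (Submodule.mem_iSup_of_mem (Finset.ne_of_mem_erase hh)
        (hf h (Finset.mem_of_mem_erase hh))))
  have hd : Disjoint (𝒱 h₀) (⨆ (h) (_ : h ≠ h₀), 𝒱 h) := hV.submodule_iSupIndep h₀
  exact Submodule.disjoint_def.mp hd _ (hf h₀ hh₀) hmem

lemma aux_comp_eq_span {n : ℕ} (𝒱 : G → Submodule F V) (hV : DirectSum.IsInternal 𝒱)
    (b : Module.Basis (Fin n) F V) (τ : Fin n → G) (hb : ∀ l, b l ∈ 𝒱 (τ l)⁻¹) (h : G) :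
    𝒱 h = span F (b '' {l | (τ l)⁻¹ = h}) := by
  have hsub : span F (b '' {l | (τ l)⁻¹ = h}) ≤ 𝒱 h := by
    apply span_le.mpr
    rintro x ⟨l, hl, rfl⟩
    exact hl ▸ hb l
  apply le_antisymm _ hsub
  intro v hv
  have htop : (⊤ : Submodule F V) ≤
      span F (b '' {l | (τ l)⁻¹ = h}) ⊔ ⨆ (h') (_ : h' ≠ h), 𝒱 h' := by
    rw [← b.span_eq]
    apply span_le.mpr
    rintro x ⟨l, rfl⟩
    by_cases hl : (τ l)⁻¹ = h
    · exact Submodule.mem_sup_left (subset_span ⟨l, hl, rfl⟩)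
    · exact Submodule.mem_sup_right
        (Submodule.mem_iSup_of_mem (τ l)⁻¹ (Submodule.mem_iSup_of_mem hl (hb l)))
  obtain ⟨x, hx, y, hy, hxy⟩ := Submodule.mem_sup.mp (htop (show v ∈ ⊤ from Submodule.mem_top))
  have hyV : y ∈ 𝒱 h := by
    have h1 : y = v - x := by rw [← hxy]; abel
    rw [h1]
    exact Submodule.sub_mem _ hv (hsub hx)
  have hy0 : y = 0 :=
    Submodule.disjoint_def.mp (hV.submodule_iSupIndep h) _ hyV hy
  rw [← hxy, hy0, add_zero]
  exact hx

lemma aux_action {n : ℕ} (𝒱 : G → Submodule F V) (hV : DirectSum.IsInternal 𝒱)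
    (b : Module.Basis (Fin n) F V) (τ : Fin n → G) (hb : ∀ l, b l ∈ 𝒱 (τ l)⁻¹)
    {g : G} {φ : Module.End F V} (hφ : φ ∈ endElemComp b τ g)
    {h : G} {v : V} (hv : v ∈ 𝒱 h) : φ v ∈ 𝒱 (g * h) := by
  induction hφ using Submodule.span_induction with
  | mem ψ hψ =>
    obtain ⟨i, j, hij, rfl⟩ := hψ
    rw [aux_comp_eq_span 𝒱 hV b τ hb h] at hv
    induction hv using Submodule.span_induction with
    | mem x hx =>
      obtain ⟨l, hl, rfl⟩ := hx
      show (b.constr F fun l => if l = j then b i else 0) (b l) ∈ _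
      rw [Module.Basis.constr_basis]
      split_ifs with hlj
      · have h2 : (τ i)⁻¹ = g * h := by rw [← hij, ← hl, hlj]; group
        exact h2 ▸ hb i
      · exact Submodule.zero_mem _
    | zero => rw [map_zero]; exact Submodule.zero_mem _
    | add x y _ _ hx hy => rw [map_add]; exact Submodule.add_mem _ hx hy
    | smul a x _ hx => rw [map_smul]; exact Submodule.smul_mem _ a hx
  | zero => rw [LinearMap.zero_apply]; exact Submodule.zero_mem _
  | add ψ χ _ _ hψ' hχ' => rw [LinearMap.add_apply]; exact Submodule.add_mem _ hψ' hχ'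
  | smul a ψ _ hψ' => rw [LinearMap.smul_apply]; exact Submodule.smul_mem _ a hψ'

lemma aux_span_graded (𝒱 : G → Submodule F V) (S : Set V)
    (hS : ∀ x ∈ S, ∃ h, x ∈ 𝒱 h) :
    span F S = ⨆ h : G, span F S ⊓ 𝒱 h := by
  apply le_antisymm _ (iSup_le fun h => inf_le_left)
  apply span_le.mpr
  intro x hx
  obtain ⟨h, hxh⟩ := hS x hx
  exact Submodule.mem_iSup_of_mem h ⟨subset_span hx, hxh⟩

lemma aux_indep {ι : Type*} (p : ι → Submodule F V) (π : ι → Module.End F V)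
    (hid : ∀ i, ∀ x ∈ p i, π i x = x)
    (hker : ∀ i j, j ≠ i → p j ≤ LinearMap.ker (π i)) : iSupIndep p := by
  intro i
  rw [Submodule.disjoint_def]
  intro x hx hx'
  have h1 : π i x = x := hid i x hx
  have h2 : π i x = 0 := by
    have hle : (⨆ (j) (_ : j ≠ i), p j) ≤ LinearMap.ker (π i) :=
      iSup₂_le fun j hj => hker i j hj
    exact hle hx'
  rw [h1] at h2
  exact h2

end Aux
/-- The elementary grading component on a matrix algebra. -/
def elemComp (F : Type*) [Field F] {k : ℕ} {G : Type*} [Group G]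
    (γ : Fin k → G) (g : G) : Submodule F (Matrix (Fin k) (Fin k) F) :=
  Submodule.span F {A | ∃ i j : Fin k, (γ i)⁻¹ * γ j = g ∧ A = Matrix.single i j 1}

/-- let `C ≅ M_k(F)`, with elementary `G`-grading given by
`(g₁,…,g_k)`, be a graded subalgebra of `R = End(V)` for a finite-dimensional
`G`-graded space `V` with the induced elementary grading. Then
`V = V₁ ⊕ ⋯ ⊕ V_m ⊕ V₀` as a direct sum of `C`-invariant graded subspaces,
where each `V_j` (`1 ≤ j ≤ m`) has dimension `k` and is a faithful irreducible
`C`-module, and `C·V₀ = 0`. -/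
theorem graded_subalgebra_module_decomposition
    {F V : Type*} [Field F] [AddCommGroup V] [Module F V] [FiniteDimensional F V]
    {n : ℕ} {G : Type*} [Group G] [DecidableEq G]
    (𝒱 : G → Submodule F V) (hV : DirectSum.IsInternal 𝒱)
    (b : Module.Basis (Fin n) F V) (τ : Fin n → G)
    (hb : ∀ i : Fin n, b i ∈ 𝒱 (τ i)⁻¹)
    (k : ℕ) (γ : Fin k → G)
    (C : Submodule F (Module.End F V))
    (hCmul : ∀ c ∈ C, ∀ c' ∈ C, c * c' ∈ C)
    (hCgraded : C = ⨆ g : G, C ⊓ endElemComp b τ g)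
    (Ψ : Matrix (Fin k) (Fin k) F ≃ₗ[F] C)
    (hΨmul : ∀ X Y, ((Ψ (X * Y) : Module.End F V)) =
      (Ψ X : Module.End F V) * (Ψ Y : Module.End F V))
    (hΨgraded : ∀ (g : G) (X : Matrix (Fin k) (Fin k) F),
      X ∈ elemComp F γ g ↔ (Ψ X : Module.End F V) ∈ endElemComp b τ g) :
    ∃ (m : ℕ) (W : Option (Fin m) → Submodule F V),
      DirectSum.IsInternal W ∧
      (∀ o : Option (Fin m), W o = ⨆ h : G, W o ⊓ 𝒱 h) ∧
      (∀ (o : Option (Fin m)), ∀ c ∈ C, ∀ v ∈ W o, c v ∈ W o) ∧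
      (∀ j : Fin m, Module.finrank F (W (some j)) = k) ∧
      (∀ j : Fin m, ∀ U : Submodule F V, U ≤ W (some j) →
        (∀ c ∈ C, ∀ u ∈ U, c u ∈ U) → U = ⊥ ∨ U = W (some j)) ∧
      (∀ j : Fin m, ∀ c ∈ C, (∀ v ∈ W (some j), c v = 0) → c = 0) ∧
      (∀ c ∈ C, ∀ v ∈ W none, c v = 0) := by
  classical
  rcases Nat.eq_zero_or_pos k with hk | hk
  · -- degenerate case k = 0 : C acts as zero
    subst hk
    have hC0 : ∀ c ∈ C, c = (0 : Module.End F V) := by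
      intro c hc
      have h1 : (⟨c, hc⟩ : C) = Ψ (Ψ.symm ⟨c, hc⟩) := (Ψ.apply_symm_apply _).symm
      have h2 : Ψ.symm (⟨c, hc⟩ : C) = 0 := by
        ext i j
        exact i.elim0
      rw [h2, map_zero] at h1
      exact congrArg Subtype.val h1
    have hnone : ∀ o : Option (Fin 0), o = none := by
      rintro (_ | ⟨i⟩)
      · rfl
      · exact i.elim0
    refine ⟨0, fun _ => ⊤, ?_, ?_, ?_, fun j => j.elim0, fun j => j.elim0,
      fun j => j.elim0, ?_⟩
    · apply DirectSum.isInternal_submodule_of_iSupIndep_of_iSup_eq_top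
      · intro o
        have h1 : (⨆ (o' : Option (Fin 0)) (_ : o' ≠ o), (⊤ : Submodule F V)) = ⊥ := by
          apply le_bot_iff.mp
          apply iSup₂_le
          intro o' ho'
          exact absurd ((hnone o').trans (hnone o).symm) ho'
        rw [h1]
        exact disjoint_bot_right
      · exact iSup_const
    · intro o
      simp only [top_inf_eq]
      exact hV.submodule_iSup_eq_top.symm
    · intro o c hc v hv
      exact Submodule.mem_top
    · intro c hc v hv
      rw [hC0 c hc]
      rfl
  · -- main case k > 0
    have i₀ : Fin k := ⟨0, hk⟩
    -- the embedding of the matrix algebra into End(V)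
    set Φ : Matrix (Fin k) (Fin k) F →ₗ[F] Module.End F V :=
      C.subtype.comp Ψ.toLinearMap with hΦdef
    have hΦmul : ∀ X Y, Φ (X * Y) = Φ X * Φ Y := hΨmul
    have hΦC : ∀ X, Φ X ∈ C := fun X => (Ψ X).2
    have hΦrep : ∀ c ∈ C, ∃ X, Φ X = c := by
      intro c hc
      exact ⟨Ψ.symm ⟨c, hc⟩, congrArg Subtype.val (Ψ.apply_symm_apply ⟨c, hc⟩)⟩
    have hΦgraded : ∀ (g : G) (X), X ∈ elemComp F γ g ↔ Φ X ∈ endElemComp b τ g :=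
      hΨgraded
    -- matrix units
    set E : Fin k → Fin k → Module.End F V :=
      fun i j => Φ (Matrix.single i j 1) with hEdef
    set e : Module.End F V := Φ 1 with hedef
    have hEC : ∀ i j, E i j ∈ C := fun i j => hΦC _
    have hEE : ∀ (i j p q : Fin k) (w : V),
        E i j (E p q w) = if j = p then E i q w else 0 := by
      intro i j p q w
      by_cases hjp : j = p
      · subst hjp
        rw [if_pos rfl, ← Module.End.mul_apply, ← hΦmul,
          Matrix.single_mul_single_same, one_mul]
      · rw [if_neg hjp, ← Module.End.mul_apply, ← hΦmul,
          Matrix.single_mul_single_of_ne (h := hjp), map_zero, LinearMap.zero_apply]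
    have heΦ : ∀ X (w : V), e (Φ X w) = Φ X w := by
      intro X w
      rw [← Module.End.mul_apply, ← hΦmul, one_mul]
    have hΦe : ∀ X (w : V), Φ X (e w) = Φ X w := by
      intro X w
      rw [← Module.End.mul_apply, ← hΦmul, mul_one]
    have hone : (1 : Matrix (Fin k) (Fin k) F) = ∑ i, Matrix.single i i 1 := by
      ext p q
      rw [Matrix.sum_apply]
      simp only [Matrix.single, Matrix.of_apply, Matrix.one_apply]
      rw [Finset.sum_eq_single p (fun i _ hi => if_neg (fun hh => hi hh.1)) (by simp)]
      by_cases h : p = q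
      · subst h; simp
      · simp [h]
    have hXE : ∀ (X : Matrix (Fin k) (Fin k) F) (i : Fin k),
        X * Matrix.single i i₀ 1 = ∑ p, X p i • Matrix.single p i₀ 1 := by
      intro X i
      ext a c
      rw [Matrix.mul_apply, Matrix.sum_apply]
      simp only [Matrix.smul_apply, Matrix.single, Matrix.of_apply, smul_eq_mul,
        mul_ite, mul_one, mul_zero]
      rw [Finset.sum_eq_single i (fun r _ hr => if_neg (fun hh => hr hh.1.symm)) (by simp),
        Finset.sum_eq_single a (fun p _ hp => if_neg (fun hh => hp hh.1)) (by simp)]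
      by_cases h : i₀ = c
      · simp [h]
      · simp [h]
    -- degrees
    have hEdeg : ∀ i j, E i j ∈ endElemComp b τ ((γ i)⁻¹ * γ j) := fun i j =>
      (hΦgraded _ _).mp (Submodule.subset_span ⟨i, j, rfl, rfl⟩)
    have hedeg : e ∈ endElemComp b τ 1 := by
      apply (hΦgraded 1 1).mp
      rw [hone]
      exact Submodule.sum_mem _ fun i _ =>
        Submodule.subset_span ⟨i, i, inv_mul_cancel _, rfl⟩
    -- decomposition of vectors into homogeneous components
    have hdecomp : ∀ w : V, ∃ s : Finset G, ∃ f : G → V,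
        (∀ h ∈ s, f h ∈ 𝒱 h) ∧ ∑ h ∈ s, f h = w := by
      intro w
      refine ⟨Finset.image (fun l => (τ l)⁻¹) Finset.univ,
        fun h => ∑ l ∈ Finset.univ.filter (fun l => (τ l)⁻¹ = h), b.repr w l • b l, ?_, ?_⟩
      · intro h hh
        exact Submodule.sum_mem _ fun l hl =>
          (Finset.mem_filter.mp hl).2 ▸ Submodule.smul_mem _ _ (hb l)
      · rw [Finset.sum_fiberwise_of_maps_to (fun l _ =>
          Finset.mem_image_of_mem _ (Finset.mem_univ l))]
        exact b.sum_repr w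
    -- the range of e₀₀
    set U₀ : Submodule F V := LinearMap.range (E i₀ i₀) with hU₀def
    have hfix : ∀ x ∈ U₀, E i₀ i₀ x = x := by
      rintro x ⟨w, rfl⟩
      rw [hEE, if_pos rfl]
    have hU₀span : (⨆ h : G, U₀ ⊓ 𝒱 h) = U₀ := by
      apply le_antisymm (iSup_le fun h => inf_le_left)
      rintro x ⟨w, rfl⟩
      obtain ⟨s, f, hf, hsum⟩ := hdecomp w
      rw [← hsum, map_sum]
      refine Submodule.sum_mem _ fun h hh => Submodule.mem_iSup_of_mem h ⟨⟨f h, rfl⟩, ?_⟩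
      have := aux_action 𝒱 hV b τ hb
        (g := (γ i₀)⁻¹ * γ i₀) (hEdeg i₀ i₀) (hf h hh)
      rwa [inv_mul_cancel, one_mul] at this
    -- a homogeneous basis of U₀
    have hTspan : span F (⋃ h : G, ((U₀ ⊓ 𝒱 h : Submodule F V) : Set V)) = U₀ := by
      rw [span_iUnion]
      simp only [Submodule.span_eq]
      exact hU₀span
    obtain ⟨s, hsT, hspan, hli⟩ :=
      exists_linearIndependent F (⋃ h : G, ((U₀ ⊓ 𝒱 h : Submodule F V) : Set V))
    rw [hTspan] at hspan
    have hsfin : s.Finite := hli.setFinite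
    haveI : Fintype s := hsfin.fintype
    set m : ℕ := Fintype.card s with hmdef
    set eqv : s ≃ Fin m := Fintype.equivFin s with heqvdef
    set v : Fin m → V := fun j => ((eqv.symm j : s) : V) with hvdef
    have hv_li : LinearIndependent F v := hli.comp eqv.symm eqv.symm.injective
    have hv_range : Set.range v = s := by
      rw [show v = Subtype.val ∘ eqv.symm from rfl, Set.range_comp,
        Equiv.range_eq_univ, Set.image_univ, Subtype.range_coe]
    have hv_span : span F (Set.range v) = U₀ := by rw [hv_range, hspan]
    have hvmem : ∀ j, v j ∈ ⋃ h : G, ((U₀ ⊓ 𝒱 h : Submodule F V) : Set V) :=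
      fun j => hsT (by rw [← hv_range]; exact Set.mem_range_self j)
    have hvU : ∀ j, v j ∈ U₀ := by
      intro j
      obtain ⟨t, ⟨h, rfl⟩, hm⟩ := hvmem j
      exact hm.1
    have hvh : ∀ j, ∃ h, v j ∈ 𝒱 h := by
      intro j
      obtain ⟨t, ⟨h, rfl⟩, hm⟩ := hvmem j
      exact ⟨h, hm.2⟩
    have hvfix : ∀ j, E i₀ i₀ (v j) = v j := fun j => hfix _ (hvU j)
    have hvne : ∀ j, v j ≠ 0 := fun j => hv_li.ne_zero j
    -- dual functionals
    obtain ⟨Q, hQ⟩ := Submodule.exists_isCompl (span F (Set.range v))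
    set Bv : Module.Basis (Fin m) F (span F (Set.range v)) := Module.Basis.span hv_li with hBvdef
    set f : Fin m → (V →ₗ[F] F) := fun j =>
      (Bv.coord j).comp (Submodule.linearProjOfIsCompl _ Q hQ) with hfdef
    have hf : ∀ j j', f j (v j') = if j' = j then (1 : F) else 0 := by
      intro j j'
      have h1 : Submodule.linearProjOfIsCompl _ Q hQ (v j') = Bv j' := by
        have h2 : (Bv j' : V) = v j' := congrArg Subtype.val (Module.Basis.span_apply hv_li j')
        rw [← h2]
        exact Submodule.linearProjOfIsCompl_apply_left hQ _
      show Bv.coord j (Submodule.linearProjOfIsCompl _ Q hQ (v j')) = _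
      rw [h1, Module.Basis.coord_apply, Bv.repr_self, Finsupp.single_apply]
    -- the decomposition
    set W : Option (Fin m) → Submodule F V := fun o =>
      o.elim (LinearMap.ker e) (fun j => span F (Set.range fun i : Fin k => E i i₀ (v j)))
      with hWdef
    have hWgen : ∀ j i, E i i₀ (v j) ∈ W (some j) :=
      fun j i => Submodule.subset_span (Set.mem_range_self i)
    -- projections
    set π : Option (Fin m) → Module.End F V := fun o =>
      o.elim ((1 : Module.End F V) - e)
        (fun j => ∑ i, LinearMap.smulRight ((f j).comp ((E i₀ i₀).comp (E i₀ i)))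
          (E i i₀ (v j))) with hπdef
    have hπs : ∀ j (w : V), π (some j) w
        = ∑ i, f j (E i₀ i₀ (E i₀ i w)) • E i i₀ (v j) := by
      intro j w
      show (∑ i, LinearMap.smulRight ((f j).comp ((E i₀ i₀).comp (E i₀ i)))
          (E i i₀ (v j))) w = _
      rw [LinearMap.sum_apply]
      rfl
    have hπgen : ∀ j j' (i' : Fin k),
        π (some j) (E i' i₀ (v j')) = if j' = j then E i' i₀ (v j') else 0 := by
      intro j j' i'
      rw [hπs]
      rw [Finset.sum_eq_single i' (fun i _ hi => by
        rw [hEE i₀ i i' i₀, if_neg hi, map_zero, map_zero, zero_smul]) (by simp)]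
      rw [hEE i₀ i' i' i₀, if_pos rfl, hvfix j', hvfix j', hf j j']
      by_cases hjj : j' = j
      · rw [if_pos hjj, if_pos hjj, one_smul, hjj]
      · rw [if_neg hjj, if_neg hjj, zero_smul]
    have hπker : ∀ j (x : V), x ∈ LinearMap.ker e → π (some j) x = 0 := by
      intro j x hx
      rw [hπs]
      apply Finset.sum_eq_zero
      intro i _
      have h1 : E i₀ i x = 0 := by
        have h2 := hΦe (Matrix.single i₀ i 1) x
        rw [LinearMap.mem_ker.mp hx, map_zero] at h2
        exact h2.symm
      rw [h1, map_zero, map_zero, zero_smul]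
    -- independence
    have hindep : iSupIndep W := by
      apply aux_indep W π
      · rintro (_ | j) x hx
        · show (1 - e) x = x
          rw [LinearMap.sub_apply, Module.End.one_apply, LinearMap.mem_ker.mp hx, sub_zero]
        · have hle : W (some j) ≤ LinearMap.ker (π (some j) - 1) := by
            apply span_le.mpr
            rintro _ ⟨i, rfl⟩
            rw [SetLike.mem_coe, LinearMap.mem_ker, LinearMap.sub_apply,
              Module.End.one_apply, hπgen j j i, if_pos rfl, sub_self]
          have h1 := LinearMap.mem_ker.mp (hle hx)
          rw [LinearMap.sub_apply, Module.End.one_apply, sub_eq_zero] at h1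
          exact h1
      · rintro (_ | j) (_ | j') ho
        · exact absurd rfl ho
        · -- W (some j') ≤ ker (1 - e)
          apply span_le.mpr
          rintro _ ⟨i, rfl⟩
          rw [SetLike.mem_coe, LinearMap.mem_ker]
          show (1 - e) (E i i₀ (v j')) = 0
          rw [LinearMap.sub_apply, Module.End.one_apply,
            heΦ (Matrix.single i i₀ 1), sub_self]
        · -- ker e ≤ ker (π (some j))
          intro x hx
          exact LinearMap.mem_ker.mpr (hπker j x hx)
        · -- W (some j') ≤ ker (π (some j)), j' ≠ j
          have hjj : j' ≠ j := fun hh => ho (by rw [hh])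
          apply span_le.mpr
          rintro _ ⟨i, rfl⟩
          rw [SetLike.mem_coe, LinearMap.mem_ker, hπgen j j' i, if_neg hjj]
    -- spanning
    have hesum : e = ∑ i, E i i := by rw [hedef, hone, map_sum]
    have hsup : (⨆ o, W o) = ⊤ := by
      rw [eq_top_iff]
      intro w _
      have h1 : w - e w ∈ W none := by
        show w - e w ∈ LinearMap.ker e
        rw [LinearMap.mem_ker, map_sub, heΦ 1 w, sub_self]
      have h2 : e w ∈ ⨆ o, W o := by
        rw [hesum]
        rw [LinearMap.sum_apply]
        apply Submodule.sum_mem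
        intro i _
        have h3 : E i₀ i w ∈ U₀ := ⟨E i₀ i w, by rw [hEE, if_pos rfl]⟩
        rw [← hv_span] at h3
        obtain ⟨c, hc⟩ := (mem_span_range_iff_exists_fun F).mp h3
        have h4 : E i i w = ∑ j, c j • E i i₀ (v j) := by
          rw [show E i i w = E i i₀ (E i₀ i w) from by rw [hEE, if_pos rfl], ← hc,
            map_sum]
          simp only [map_smul]
        rw [h4]
        exact Submodule.sum_mem _ fun j _ => Submodule.mem_iSup_of_mem (some j)
          (Submodule.smul_mem _ _ (hWgen j i))
      have h5 : w = (w - e w) + e w := by abel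
      rw [h5]
      exact Submodule.add_mem _ (Submodule.mem_iSup_of_mem none h1) h2
    -- linear independence of the generators of each W (some j)
    have hli_j : ∀ j, LinearIndependent F (fun i : Fin k => E i i₀ (v j)) := by
      intro j
      rw [Fintype.linearIndependent_iff]
      intro c hc p
      have h1 : E i₀ p (∑ i, c i • E i i₀ (v j)) = c p • v j := by
        rw [map_sum, Finset.sum_eq_single p (fun i _ hi => by
          rw [map_smul, hEE i₀ p i i₀, if_neg (fun hh => hi hh.symm), smul_zero]) (by simp)]
        rw [map_smul, hEE i₀ p p i₀, if_pos rfl, hvfix j]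
      rw [hc, map_zero] at h1
      rcases smul_eq_zero.mp h1.symm with h | h
      · exact h
      · exact absurd h (hvne j)
    refine ⟨m, W, ?_, ?_, ?_, ?_, ?_, ?_, ?_⟩
    · exact DirectSum.isInternal_submodule_of_iSupIndep_of_iSup_eq_top hindep hsup
    · -- gradedness
      rintro (_ | j)
      · apply le_antisymm _ (iSup_le fun h => inf_le_left)
        intro x hx
        obtain ⟨s', f', hf', hsum'⟩ := hdecomp x
        have hker : ∀ h ∈ s', e (f' h) = 0 := by
          apply aux_sum_eq_zero 𝒱 hV s' (fun h => e (f' h))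
          · intro h hh
            have := aux_action 𝒱 hV b τ hb (g := 1) hedeg (hf' h hh)
            rwa [one_mul] at this
          · rw [← map_sum, hsum']
            exact LinearMap.mem_ker.mp hx
        rw [← hsum']
        exact Submodule.sum_mem _ fun h hh => Submodule.mem_iSup_of_mem h
          ⟨LinearMap.mem_ker.mpr (hker h hh), hf' h hh⟩
      · show span F (Set.range fun i : Fin k => E i i₀ (v j)) = _
        apply aux_span_graded
        rintro _ ⟨i, rfl⟩
        obtain ⟨h, hvjh⟩ := hvh j
        exact ⟨(γ i)⁻¹ * γ i₀ * h, aux_action 𝒱 hV b τ hb (hEdeg i i₀) hvjh⟩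
    · -- invariance
      rintro (_ | j) c hc u hu
      · obtain ⟨X, rfl⟩ := hΦrep c hc
        have h1 : Φ X u = 0 := by
          have h2 := hΦe X u
          rw [show e u = 0 from LinearMap.mem_ker.mp hu, map_zero] at h2
          exact h2.symm
        rw [h1]
        exact Submodule.zero_mem _
      · obtain ⟨X, rfl⟩ := hΦrep c hc
        have h1 : ∀ i, Φ X (E i i₀ (v j)) ∈ W (some j) := by
          intro i
          have h2 : Φ X (E i i₀ (v j)) = ∑ p, X p i • E p i₀ (v j) := by
            rw [← Module.End.mul_apply, ← hΦmul, hXE, map_sum, LinearMap.sum_apply]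
            simp only [map_smul, LinearMap.smul_apply]
            rfl
          rw [h2]
          exact Submodule.sum_mem _ fun p _ => Submodule.smul_mem _ _ (hWgen j p)
        have hle : W (some j) ≤ (W (some j)).comap (Φ X) := by
          apply span_le.mpr
          rintro _ ⟨i, rfl⟩
          exact h1 i
        exact hle hu
    · -- dimension
      intro j
      show Module.finrank F (span F (Set.range fun i : Fin k => E i i₀ (v j))) = k
      rw [finrank_span_eq_card (hli_j j), Fintype.card_fin]
    · -- irreducibility
      intro j U hUle hUinv
      by_cases hU : U = ⊥
      · exact Or.inl hU
      right
      obtain ⟨u, huU, hune⟩ := (Submodule.ne_bot_iff U).mp hU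
      apply le_antisymm hUle
      obtain ⟨c, hc⟩ := (mem_span_range_iff_exists_fun F).mp
        (show u ∈ span F (Set.range fun i : Fin k => E i i₀ (v j)) from hUle huU)
      have hcne : ∃ i, c i ≠ 0 := by
        by_contra hall
        push_neg at hall
        apply hune
        rw [← hc]
        exact Finset.sum_eq_zero fun i _ => by rw [hall i, zero_smul]
      obtain ⟨i, hci⟩ := hcne
      have hgen : ∀ p, E p i₀ (v j) ∈ U := by
        intro p
        have h1 : E p i u = c i • E p i₀ (v j) := by
          rw [← hc, map_sum, Finset.sum_eq_single i (fun i' _ hi' => by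
            rw [map_smul, hEE p i i' i₀, if_neg (fun hh => hi' hh.symm), smul_zero]) (by simp)]
          rw [map_smul, hEE p i i i₀, if_pos rfl]
        have h2 : E p i u ∈ U := hUinv _ (hEC p i) u huU
        rw [h1] at h2
        have h3 := U.smul_mem (c i)⁻¹ h2
        rwa [smul_smul, inv_mul_cancel₀ hci, one_smul] at h3
      apply span_le.mpr
      rintro _ ⟨p, rfl⟩
      exact hgen p
    · -- faithfulness
      intro j c hc hzero
      obtain ⟨X, rfl⟩ := hΦrep c hc
      have hXz : X = 0 := by
        ext p i
        have h1 : Φ X (E i i₀ (v j)) = 0 := hzero _ (hWgen j i)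
        have h2 : Φ X (E i i₀ (v j)) = ∑ p', X p' i • E p' i₀ (v j) := by
          rw [← Module.End.mul_apply, ← hΦmul, hXE, map_sum, LinearMap.sum_apply]
          simp only [map_smul, LinearMap.smul_apply]
          rfl
        rw [h2] at h1
        exact Fintype.linearIndependent_iff.mp (hli_j j) (fun p' => X p' i) h1 p
      rw [hXz, map_zero]
    · -- C kills W none
      intro c hc u hu
      obtain ⟨X, rfl⟩ := hΦrep c hc
      have h2 := hΦe X u
      rw [show e u = 0 from LinearMap.mem_ker.mp hu, map_zero] at h2
      exact h2.symm
end

section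
/- Let D₁ ⊆ R₁ and D₂ ⊆ R₂ be finely graded matrix subalgebras with common support group T, spanned by invertible homogeneous elements X_t ∈ R₁ and X_t′ ∈ R₂ (t ∈ T) satisfying X_tX_s = α(t,s)X_{ts} and X_t′X_s′ = α(t,s)X_{ts}′ for the same scalars α(t,s) ∈ F×, with X₁ = e₁ and X₁′ = e₂ the identities. Suppose φ : R₁ → R₂ is an injective graded algebra homomorphism with φ(X_t) = A_t X_t′ where A_t ∈ C_{R₂}(D₂) is homogeneous of degree 1. Set X_t″ = (A_t φ(e₁) + e₂ − φ(e₁)) X_t′. Then X_t″ X_s″ = α(t,s) X_{ts}″ for all t, s ∈ T, so span{X_t″ : t ∈ T} is a graded subalgebra of R₂ graded-isomorphic to D₁ via X_t ↦ X_t″. -/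
/-- let `D₁ ⊆ R₁`, `D₂ ⊆ R₂` be finely graded matrix subalgebras
with common support group `T`, spanned by invertible homogeneous elements
`X_t`, `X_t′` with `X_tX_s = α(t,s)X_{ts}`, `X_t′X_s′ = α(t,s)X_{ts}′`,
`X₁ = e₁`, `X₁′ = e₂`. Let `φ : R₁ → R₂` be an injective graded homomorphism
with `φ(X_t) = A_tX_t′`, `A_t` a degree-one element of the centralizer of `D₂`.
Put `X_t″ = (A_tφ(e₁) + e₂ − φ(e₁))X_t′`. Then `φ(e₁)A_t = A_tφ(e₁) = A_t`,
`φ(e₁)` commutes with each `X_t′`, `X_t″X_s″ = α(t,s)X_{ts}″`, each `X_t″` is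
homogeneous of degree `t`, and the `X_t″` are linearly independent, so their
span is a graded subalgebra of `R₂` graded-isomorphic to `D₁` via
`X_t ↦ X_t″`. -/
theorem twisted_units_transport
    (F : Type*) [Field F] (G : Type*) [Group G] [DecidableEq G] (T : Subgroup G)
    (R₁ R₂ : Type*) [Ring R₁] [Algebra F R₁] [Ring R₂] [Algebra F R₂]
    (𝒜₁ : G → Submodule F R₁) (𝒜₂ : G → Submodule F R₂)
    (h₁int : DirectSum.IsInternal 𝒜₁) (h₂int : DirectSum.IsInternal 𝒜₂)
    (h₁mul : ∀ g h : G, 𝒜₁ g * 𝒜₁ h ≤ 𝒜₁ (g * h))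
    (h₂mul : ∀ g h : G, 𝒜₂ g * 𝒜₂ h ≤ 𝒜₂ (g * h))
    (X : T → R₁) (X' : T → R₂) (α : T → T → Fˣ)
    (hXhom : ∀ t : T, X t ∈ 𝒜₁ (t : G)) (hX'hom : ∀ t : T, X' t ∈ 𝒜₂ (t : G))
    (hXunit : ∀ t : T, IsUnit (X t)) (hX'unit : ∀ t : T, IsUnit (X' t))
    (hXone : X 1 = 1) (hX'one : X' 1 = 1)
    (hXmul : ∀ t s : T, X t * X s = (α t s : F) • X (t * s))
    (hX'mul : ∀ t s : T, X' t * X' s = (α t s : F) • X' (t * s))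
    (hXind : LinearIndependent F X) (hX'ind : LinearIndependent F X')
    (φ : R₁ →ₗ[F] R₂) (hφmul : ∀ x y : R₁, φ (x * y) = φ x * φ y)
    (hφinj : Function.Injective φ)
    (hφgraded : ∀ g : G, Submodule.map φ (𝒜₁ g) ≤ 𝒜₂ g)
    (A : T → R₂)
    (hAcentral : ∀ t s : T, A t * X' s = X' s * A t)
    (hAdeg : ∀ t : T, A t ∈ 𝒜₂ (1 : G))
    (hAfact : ∀ t : T, φ (X t) = A t * X' t) :
    (∀ t : T, φ 1 * A t = A t ∧ A t * φ 1 = A t) ∧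
    (∀ t : T, φ 1 * X' t = X' t * φ 1) ∧
    (∀ t s : T,
      ((A t * φ 1 + 1 - φ 1) * X' t) * ((A s * φ 1 + 1 - φ 1) * X' s) =
        (α t s : F) • ((A (t * s) * φ 1 + 1 - φ 1) * X' (t * s))) ∧
    (∀ t : T, (A t * φ 1 + 1 - φ 1) * X' t ∈ 𝒜₂ (t : G)) ∧
    LinearIndependent F (fun t : T => (A t * φ 1 + 1 - φ 1) * X' t) := by

  -- basic facts
  have hφone : φ 1 = A 1 := by
    have h := hAfact 1
    rwa [hXone, hX'one, mul_one] at h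
  have he_idem : φ 1 * φ 1 = φ 1 := by
    rw [← hφmul]; norm_num
  have heX' : ∀ t : T, φ 1 * X' t = X' t * φ 1 := fun t => by
    rw [hφone]; exact hAcentral 1 t
  have hcancel : ∀ (t : T) (a b : R₂), a * X' t = b * X' t → a = b := by
    intro t a b h
    exact (hX'unit t).mul_right_cancel h
  have heA : ∀ t : T, φ 1 * A t = A t := by
    intro t
    apply hcancel t
    rw [mul_assoc, ← hAfact, ← hφmul, one_mul, hAfact]
  have hAe : ∀ t : T, A t * φ 1 = A t := by
    intro t
    apply hcancel t
    have h : φ (X t) = A t * φ 1 * X' t := by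
      calc φ (X t) = φ (X t * 1) := by rw [mul_one]
        _ = A t * X' t * φ 1 := by rw [hφmul, hAfact]
        _ = A t * (X' t * φ 1) := by rw [mul_assoc]
        _ = A t * (φ 1 * X' t) := by rw [heX']
        _ = A t * φ 1 * X' t := by rw [mul_assoc]
    rw [← h, hAfact]
  have hB : ∀ t : T, A t * φ 1 + 1 - φ 1 = A t + 1 - φ 1 := fun t => by rw [hAe]
  have hAmul : ∀ t s : T, A t * A s = A (t * s) := by
    intro t s
    have h1 : φ (X t * X s) = (α t s : F) • (A t * A s * X' (t * s)) := by
      calc φ (X t * X s) = A t * X' t * (A s * X' s) := by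
            rw [hφmul, hAfact, hAfact]
        _ = A t * (X' t * A s) * X' s := by noncomm_ring
        _ = A t * (A s * X' t) * X' s := by rw [← hAcentral]
        _ = A t * A s * (X' t * X' s) := by noncomm_ring
        _ = A t * A s * ((α t s : F) • X' (t * s)) := by rw [hX'mul]
        _ = (α t s : F) • (A t * A s * X' (t * s)) := by rw [mul_smul_comm]
    have h2 : φ (X t * X s) = (α t s : F) • (A (t * s) * X' (t * s)) := by
      rw [hXmul, map_smul, hAfact]
    have h3 : A t * A s * X' (t * s) = A (t * s) * X' (t * s) := by
      have h := h1.symm.trans h2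
      have hα : ((α t s : F)) ≠ 0 := (α t s).ne_zero
      exact smul_right_injective R₂ hα h
    exact hcancel _ _ _ h3
  have hkey : ∀ t s : T, (A t + 1 - φ 1) * (A s + 1 - φ 1) = A (t * s) + 1 - φ 1 := by
    intro t s
    have expand : (A t + 1 - φ 1) * (A s + 1 - φ 1)
        = A t * A s + (A t - A t * φ 1) + (A s - φ 1 * A s) + (1 - φ 1)
          - (φ 1 - φ 1 * φ 1) := by noncomm_ring
    rw [expand, hAmul, hAe, heA, he_idem]
    abel
  refine ⟨fun t => ⟨heA t, hAe t⟩, heX', ?_, ?_, ?_⟩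
  · intro t s
    have hcomm : X' t * (A s + 1 - φ 1) = (A s + 1 - φ 1) * X' t := by
      rw [sub_mul, add_mul, mul_sub, mul_add, hAcentral, heX', mul_one, one_mul]
    calc ((A t * φ 1 + 1 - φ 1) * X' t) * ((A s * φ 1 + 1 - φ 1) * X' s)
        = ((A t + 1 - φ 1) * X' t) * ((A s + 1 - φ 1) * X' s) := by rw [hB, hB]
      _ = (A t + 1 - φ 1) * (X' t * (A s + 1 - φ 1)) * X' s := by noncomm_ring
      _ = (A t + 1 - φ 1) * ((A s + 1 - φ 1) * X' t) * X' s := by rw [hcomm]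
      _ = ((A t + 1 - φ 1) * (A s + 1 - φ 1)) * (X' t * X' s) := by noncomm_ring
      _ = (A (t * s) + 1 - φ 1) * ((α t s : F) • X' (t * s)) := by rw [hkey, hX'mul]
      _ = (α t s : F) • ((A (t * s) + 1 - φ 1) * X' (t * s)) := by rw [mul_smul_comm]
      _ = (α t s : F) • ((A (t * s) * φ 1 + 1 - φ 1) * X' (t * s)) := by rw [hB]
  · intro t
    have hone2 : (1 : R₂) ∈ 𝒜₂ (1 : G) := by
      have h := hX'hom 1
      rwa [hX'one, Subgroup.coe_one] at h
    have he2 : φ 1 ∈ 𝒜₂ (1 : G) := by rw [hφone]; exact hAdeg 1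
    have hAφ : A t * φ 1 ∈ 𝒜₂ (1 : G) := by
      have := h₂mul 1 1 (Submodule.mul_mem_mul (hAdeg t) he2)
      rwa [one_mul] at this
    have hBmem : A t * φ 1 + 1 - φ 1 ∈ 𝒜₂ (1 : G) :=
      sub_mem (add_mem hAφ hone2) he2
    have := h₂mul 1 (t : G) (Submodule.mul_mem_mul hBmem (hX'hom t))
    rwa [one_mul] at this
  · have hcomp : LinearIndependent F (fun t : T => φ (X t)) :=
      hXind.map' φ (LinearMap.ker_eq_bot.mpr hφinj)
    apply LinearIndependent.of_comp (LinearMap.mulLeft F (φ 1))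
    have heq : (⇑(LinearMap.mulLeft F (φ 1)) ∘ fun t : T => (A t * φ 1 + 1 - φ 1) * X' t)
        = fun t : T => φ (X t) := by
      funext t
      simp only [Function.comp_apply, LinearMap.mulLeft_apply, hB]
      calc φ 1 * ((A t + 1 - φ 1) * X' t)
          = (φ 1 * A t + φ 1 - φ 1 * φ 1) * X' t := by noncomm_ring
        _ = A t * X' t := by rw [heA, he_idem, add_sub_cancel_right]
        _ = φ (X t) := (hAfact t).symm
    rw [heq]
    exact hcomp
end

section
/- Let G be a group and let τ, τ′ : I → G (I = ℕ or a finite initial segment) define elementary gradings on the algebra R of finitary matrices. For σ : I → G put S_σ(g) = Card(σ⁻¹(g)) ∈ ℕ ∪ {∞}. Then the two elementary gradings are isomorphic as G-graded algebras if and only if there exists g₀ ∈ G such that S_τ(g) = S_{τ′}(g₀ g) for all g ∈ G. -/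
section Finitary

variable (F : Type*) [Field F] (ι : Type*) [DecidableEq ι]

/-- The matrix unit `E i j` inside `End(ι →₀ F)`. -/
noncomputable def Eij (i j : ι) : Module.End F (ι →₀ F) :=
  (Finsupp.lsingle i).comp (Finsupp.lapply j)

theorem Eij_mul (i j k l : ι) :
    Eij F ι i j * Eij F ι k l = if j = k then Eij F ι i l else 0 := by
  ext f m
  simp only [Eij, Module.End.mul_apply, LinearMap.comp_apply, Finsupp.lapply_apply,
    Finsupp.lsingle_apply, Finsupp.single_apply]
  split_ifs with h h' <;>
    simp_all [Finsupp.single_apply, Finsupp.lapply_apply, Finsupp.lsingle_apply, Eij,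
      LinearMap.comp_apply]

/-- The algebra of finitary matrices, as the span of the matrix units in
`End(ι →₀ F)`. -/
noncomputable def finitaryMat : Submodule F (Module.End F (ι →₀ F)) :=
  Submodule.span F {f | ∃ i j : ι, f = Eij F ι i j}

theorem finitaryMat_mul_mem {x y : Module.End F (ι →₀ F)}
    (hx : x ∈ finitaryMat F ι) (hy : y ∈ finitaryMat F ι) :
    x * y ∈ finitaryMat F ι := by
  have h : finitaryMat F ι * finitaryMat F ι ≤ finitaryMat F ι := by
    rw [finitaryMat, Submodule.span_mul_span]
    refine Submodule.span_le.mpr ?_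
    rintro z ⟨a, ⟨i, j, rfl⟩, b, ⟨k, l, rfl⟩, rfl⟩
    show Eij F ι i j * Eij F ι k l ∈ _
    rw [Eij_mul]
    split_ifs
    · exact Submodule.subset_span ⟨i, l, rfl⟩
    · exact (Submodule.span F _).zero_mem
  exact h (Submodule.mul_mem_mul hx hy)

/-- The elementary grading component of degree `g` defined by `τ`. -/
noncomputable def finElemComp {G : Type*} [Group G] (τ : ι → G) (g : G) :
    Submodule F (Module.End F (ι →₀ F)) :=
  Submodule.span F {f | ∃ i j : ι, (τ i)⁻¹ * τ j = g ∧ f = Eij F ι i j}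

end Finitary


section NewAux
variable (F : Type*) [Field F] (ι : Type*) [DecidableEq ι]
set_option linter.unusedSectionVars false

theorem Eij_apply (i j : ι) (v : ι →₀ F) : Eij F ι i j v = Finsupp.single i (v j) := rfl

theorem Eij_mem_finitary (i j : ι) : Eij F ι i j ∈ finitaryMat F ι :=
  Submodule.subset_span ⟨i, j, rfl⟩

theorem Eij_ne_zero (i j : ι) : Eij F ι i j ≠ 0 := fun h => by
  have := congrArg (fun x : Module.End F (ι →₀ F) => (x (Finsupp.single j 1)) i) h
  simp [Eij_apply, Finsupp.single_eq_same] at this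

theorem Eij_mem_comp {G : Type*} [Group G] (τ : ι → G) (i j : ι) :
    Eij F ι i j ∈ finElemComp F ι τ ((τ i)⁻¹ * τ j) :=
  Submodule.subset_span ⟨i, j, rfl, rfl⟩

theorem comp_le_finitary {G : Type*} [Group G] (τ : ι → G) (g : G) :
    finElemComp F ι τ g ≤ finitaryMat F ι :=
  Submodule.span_mono (by rintro x ⟨i, j, -, rfl⟩; exact ⟨i, j, rfl⟩)

theorem comp_apply_mem {G : Type*} [Group G] {σ : ι → G} {g : G}
    {x : Module.End F (ι →₀ F)} (hx : x ∈ finElemComp F ι σ g) (h : G)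
    {v : ι →₀ F} (hv : v ∈ Finsupp.supported F F (σ ⁻¹' {h})) :
    x v ∈ Finsupp.supported F F (σ ⁻¹' {h * g⁻¹}) := by
  induction hx using Submodule.span_induction with
  | mem y hy =>
      obtain ⟨i, j, hg, rfl⟩ := hy
      rw [Eij_apply]
      by_cases hj : σ j = h
      · refine Finsupp.single_mem_supported F _ ?_
        have : σ i = h * g⁻¹ := by
          rw [← hg, ← hj]; group
        exact this
      · have h0 : v j = 0 := by
          rw [Finsupp.mem_supported'] at hv
          exact hv j (by simpa using hj)
        simp [h0]
  | zero => simp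
  | add y z _ _ hy hz => rw [LinearMap.add_apply]; exact add_mem hy hz
  | smul c y _ hy => rw [LinearMap.smul_apply]; exact Submodule.smul_mem _ _ hy

theorem supported_eq_zero {G : Type*} [Group G] (σ : ι → G) {g g' : G} (hne : g ≠ g')
    {v : ι →₀ F} (h1 : v ∈ Finsupp.supported F F (σ ⁻¹' {g}))
    (h2 : v ∈ Finsupp.supported F F (σ ⁻¹' {g'})) : v = 0 := by
  rw [Finsupp.mem_supported] at h1 h2
  rw [← Finsupp.support_eq_empty]
  refine Finset.eq_empty_of_forall_notMem fun k hk => ?_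
  have e1 : σ k = g := h1 hk
  have e2 : σ k = g' := h2 hk
  exact hne (e1 ▸ e2)

noncomputable def rko (j : ι) : (ι →₀ F) →ₗ[F] Module.End F (ι →₀ F) where
  toFun v := LinearMap.smulRight (Finsupp.lapply j) v
  map_add' v v' := by ext m k; simp
  map_smul' c v := by ext m k; simp; ring

theorem rko_apply (j : ι) (v m : ι →₀ F) : rko F ι j v m = m j • v := rfl

theorem rko_single (j i : ι) (c : F) :
    rko F ι j (Finsupp.single i c) = c • Eij F ι i j := by
  refine LinearMap.ext fun m => Finsupp.ext fun k => ?_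
  simp [rko, Eij_apply, Finsupp.single_apply, LinearMap.smulRight_apply]
  split_ifs <;> ring

theorem rko_mem (j : ι) (v : ι →₀ F) : rko F ι j v ∈ finitaryMat F ι := by
  induction v using Finsupp.induction with
  | zero => rw [map_zero]; exact (finitaryMat F ι).zero_mem
  | single_add a b f _ _ ih =>
      rw [map_add, rko_single]
      exact add_mem (Submodule.smul_mem _ _ (Eij_mem_finitary F ι a j)) ih

theorem mul_rko (j : ι) (x : Module.End F (ι →₀ F)) (v : ι →₀ F) :
    x * rko F ι j v = rko F ι j (x v) := by
  ext m k
  simp [rko_apply, Module.End.mul_apply, map_smul]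


end NewAux
section Aux2

theorem encard_eq_of_mk_eq {α : Type*} {s t : Set α}
    (h : Cardinal.mk s = Cardinal.mk t) : s.encard = t.encard := by
  simp only [Set.encard, ENat.card, h]

theorem mk_eq_of_encard_eq {α : Type*} [Countable α] {s t : Set α}
    (h : s.encard = t.encard) : Cardinal.mk s = Cardinal.mk t := by
  have hs : Cardinal.mk s ∈ Set.Iic Cardinal.aleph0 := Cardinal.mk_le_aleph0
  have ht : Cardinal.mk t ∈ Set.Iic Cardinal.aleph0 := Cardinal.mk_le_aleph0
  exact Cardinal.toENat_injOn hs ht h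

variable (F : Type*) [Field F] (ι : Type*) [DecidableEq ι]

theorem conj_Eij (π : ι ≃ ι) (i j : ι) :
    (Finsupp.domLCongr π : (ι →₀ F) ≃ₗ[F] (ι →₀ F)).conj (Eij F ι i j)
      = Eij F ι (π i) (π j) := by
  refine LinearMap.ext fun m => Finsupp.ext fun k => ?_
  simp [LinearEquiv.conj_apply_apply, Eij_apply, Finsupp.domLCongr_apply,
    Finsupp.equivMapDomain_single, Finsupp.equivMapDomain_apply]

theorem conj_mul' {M : Type*} [AddCommGroup M] [Module F M] (e : M ≃ₗ[F] M)
    (x y : Module.End F M) : e.conj (x * y) = e.conj x * e.conj y := by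
  refine LinearMap.ext fun m => ?_
  simp [LinearEquiv.conj_apply_apply, Module.End.mul_apply]

theorem conj_map_finitary (π : ι ≃ ι) :
    (finitaryMat F ι).map
      ((Finsupp.domLCongr π : (ι →₀ F) ≃ₗ[F] (ι →₀ F)).conj :
        Module.End F (ι →₀ F) →ₗ[F] Module.End F (ι →₀ F)) = finitaryMat F ι := by
  apply le_antisymm
  · rw [finitaryMat, Submodule.map_span, Submodule.span_le]
    rintro _ ⟨_, ⟨i, j, rfl⟩, rfl⟩
    rw [LinearEquiv.coe_coe, conj_Eij]
    exact Eij_mem_finitary F ι _ _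
  · rw [finitaryMat, Submodule.span_le]
    rintro _ ⟨i, j, rfl⟩
    refine ⟨Eij F ι (π.symm i) (π.symm j), Eij_mem_finitary F ι _ _, ?_⟩
    rw [LinearEquiv.coe_coe, conj_Eij]
    simp

theorem conj_map_comp {G : Type*} [Group G] (τ τ' : ι → G) (π : ι ≃ ι) (g₀ : G)
    (hπ : ∀ i, τ' (π i) = g₀ * τ i) (g : G) :
    (finElemComp F ι τ g).map
      ((Finsupp.domLCongr π : (ι →₀ F) ≃ₗ[F] (ι →₀ F)).conj :
        Module.End F (ι →₀ F) →ₗ[F] Module.End F (ι →₀ F)) = finElemComp F ι τ' g := by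
  have hπ' : ∀ i, τ (π.symm i) = g₀⁻¹ * τ' i := by
    intro i
    have := hπ (π.symm i)
    rw [π.apply_symm_apply] at this
    rw [this]; group
  apply le_antisymm
  · rw [finElemComp, Submodule.map_span, Submodule.span_le]
    rintro _ ⟨_, ⟨i, j, hg, rfl⟩, rfl⟩
    rw [LinearEquiv.coe_coe, conj_Eij]
    have : (τ' (π i))⁻¹ * τ' (π j) = g := by rw [hπ i, hπ j, ← hg]; group
    exact this ▸ Eij_mem_comp F ι τ' (π i) (π j)
  · rw [finElemComp, Submodule.span_le]
    rintro _ ⟨i, j, hg, rfl⟩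
    refine ⟨Eij F ι (π.symm i) (π.symm j), ?_, ?_⟩
    · have : (τ (π.symm i))⁻¹ * τ (π.symm j) = g := by
        rw [hπ' i, hπ' j, ← hg]; group
      exact this ▸ Eij_mem_comp F ι τ _ _
    · rw [LinearEquiv.coe_coe, conj_Eij]; simp

end Aux2
set_option maxHeartbeats 1600000 in
/-- let `τ, τ′ : I → G` (`I = ℕ` or a finite initial segment,
i.e. a countable index set) define elementary gradings on the algebra `R` of
finitary matrices, and for `σ : I → G` put `S_σ(g) = Card(σ⁻¹(g)) ∈ ℕ ∪ {∞}`.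
Then the two gradings are isomorphic as `G`-graded algebras (some algebra
automorphism of `R` maps each homogeneous component of the first grading onto
the corresponding component of the second) if and only if there is `g₀ ∈ G`
with `S_τ(g) = S_{τ′}(g₀ g)` for all `g ∈ G`. -/
theorem elementary_gradings_isomorphic_iff
    (F : Type*) [Field F] (ι : Type*) [DecidableEq ι] [Countable ι]
    (G : Type*) [Group G] (τ τ' : ι → G) :
    (∃ f : (finitaryMat F ι) ≃ₗ[F] (finitaryMat F ι),
      (∀ x y : finitaryMat F ι,
        (f ⟨(x : Module.End F (ι →₀ F)) * (y : Module.End F (ι →₀ F)),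
            finitaryMat_mul_mem F ι x.2 y.2⟩ : Module.End F (ι →₀ F)) =
          (f x : Module.End F (ι →₀ F)) * (f y : Module.End F (ι →₀ F))) ∧
      ∀ g : G,
        (fun x => f x) '' {x : finitaryMat F ι |
            (x : Module.End F (ι →₀ F)) ∈ finElemComp F ι τ g} =
          {x : finitaryMat F ι |
            (x : Module.End F (ι →₀ F)) ∈ finElemComp F ι τ' g}) ↔
    ∃ g₀ : G, ∀ g : G, (τ ⁻¹' {g}).encard = (τ' ⁻¹' {g₀ * g}).encard := by
  constructor
  · rintro ⟨f, hmul, himg⟩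
    classical
    by_cases hemp : IsEmpty ι
    · refine ⟨1, fun g => ?_⟩
      rw [Set.eq_empty_of_isEmpty (τ ⁻¹' {g}), Set.eq_empty_of_isEmpty (τ' ⁻¹' {1 * g})]
    rw [not_isEmpty_iff] at hemp
    obtain ⟨i₀⟩ := hemp
    have hmul' : ∀ (x y : Module.End F (ι →₀ F)) (hx : x ∈ finitaryMat F ι)
        (hy : y ∈ finitaryMat F ι),
        (f ⟨x * y, finitaryMat_mul_mem F ι hx hy⟩ : Module.End F (ι →₀ F)) =
          (f ⟨x, hx⟩ : Module.End F (ι →₀ F)) * (f ⟨y, hy⟩ : Module.End F (ι →₀ F)) :=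
      fun x y hx hy => hmul ⟨x, hx⟩ ⟨y, hy⟩
    have hmem : ∀ (g : G) (x : Module.End F (ι →₀ F)) (hx : x ∈ finitaryMat F ι),
        x ∈ finElemComp F ι τ g →
        (f ⟨x, hx⟩ : Module.End F (ι →₀ F)) ∈ finElemComp F ι τ' g := by
      intro g x hx hxc
      have h1 : f ⟨x, hx⟩ ∈ {y : finitaryMat F ι |
          (y : Module.End F (ι →₀ F)) ∈ finElemComp F ι τ' g} := by
        rw [← himg g]
        exact ⟨⟨x, hx⟩, hxc, rfl⟩
      exact h1
    set q : Module.End F (ι →₀ F) :=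
      (f ⟨Eij F ι i₀ i₀, Eij_mem_finitary F ι i₀ i₀⟩ : Module.End F (ι →₀ F)) with hqdef
    have hqmul : q * q = q := by
      rw [hqdef, ← hmul' _ _ (Eij_mem_finitary F ι i₀ i₀) (Eij_mem_finitary F ι i₀ i₀)]
      congr 1
      apply Subtype.ext
      simp [Eij_mul]
    have hqne : q ≠ 0 := by
      intro h0
      apply Eij_ne_zero F ι i₀ i₀
      have h1 : f ⟨Eij F ι i₀ i₀, Eij_mem_finitary F ι i₀ i₀⟩ = 0 := Subtype.ext h0
      have h2 := (LinearEquiv.map_eq_zero_iff f).mp h1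
      simpa using congrArg Subtype.val h2
    obtain ⟨a, ha⟩ : ∃ a : ι →₀ F, q a ≠ 0 := by
      by_contra hc
      push_neg at hc
      exact hqne (LinearMap.ext fun m => by simp [hc m])
    set w : ι →₀ F := q a with hwdef
    have hw : q w = w := by rw [hwdef, ← Module.End.mul_apply, hqmul]
    have hwne : w ≠ 0 := ha
    set u : (ι →₀ F) →ₗ[F] (ι →₀ F) :=
      (LinearMap.applyₗ w).comp ((finitaryMat F ι).subtype.comp (f.toLinearMap.comp
        (LinearMap.codRestrict (finitaryMat F ι) (rko F ι i₀) (rko_mem F ι i₀)))) with hudef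
    have hu : ∀ v : ι →₀ F,
        u v = (f ⟨rko F ι i₀ v, rko_mem F ι i₀ v⟩ : Module.End F (ι →₀ F)) w :=
      fun v => rfl
    have hint : ∀ (x : Module.End F (ι →₀ F)) (hx : x ∈ finitaryMat F ι) (v : ι →₀ F),
        (f ⟨x, hx⟩ : Module.End F (ι →₀ F)) (u v) = u (x v) := by
      intro x hx v
      have h1 : (f ⟨x, hx⟩ : Module.End F (ι →₀ F)) (u v)
          = ((f ⟨x, hx⟩ : Module.End F (ι →₀ F)) *
             (f ⟨rko F ι i₀ v, rko_mem F ι i₀ v⟩ : Module.End F (ι →₀ F))) w := rfl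
      rw [h1, ← hmul' _ _ hx (rko_mem F ι i₀ v)]
      have h2 : (⟨x * rko F ι i₀ v,
          finitaryMat_mul_mem F ι hx (rko_mem F ι i₀ v)⟩ : finitaryMat F ι)
          = ⟨rko F ι i₀ (x v), rko_mem F ι i₀ (x v)⟩ :=
        Subtype.ext (mul_rko F ι i₀ x v)
      rw [h2, hu]
    have hus : ∀ (i : ι) (c : F),
        u (Finsupp.single i c) = c • u (Finsupp.single i 1) := by
      intro i c
      rw [← map_smul]
      congr 1
      rw [Finsupp.smul_single, smul_eq_mul, mul_one]
    have husE : ∀ i : ι, u (Finsupp.single i 1)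
        = (f ⟨Eij F ι i i₀, Eij_mem_finitary F ι i i₀⟩ : Module.End F (ι →₀ F)) w := by
      intro i
      have h1 : (⟨rko F ι i₀ (Finsupp.single i 1),
          rko_mem F ι i₀ (Finsupp.single i 1)⟩ : finitaryMat F ι)
          = ⟨Eij F ι i i₀, Eij_mem_finitary F ι i i₀⟩ := by
        apply Subtype.ext
        show rko F ι i₀ (Finsupp.single i 1) = Eij F ι i i₀
        rw [rko_single, one_smul]
      rw [hu]
      exact congrArg (fun z : finitaryMat F ι => (f z : Module.End F (ι →₀ F)) w) h1
    have hui₀ : u (Finsupp.single i₀ 1) = w := by rw [husE i₀]; exact hw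
    have huinj : ∀ v : ι →₀ F, u v = 0 → v = 0 := by
      intro v hv
      by_contra hvne
      obtain ⟨j, hj⟩ := Finsupp.support_nonempty_iff.mpr hvne
      have h1 : u ((Eij F ι i₀ j) v) = 0 := by
        rw [← hint _ (Eij_mem_finitary F ι i₀ j), hv, map_zero]
      rw [Eij_apply, hus, hui₀] at h1
      rcases smul_eq_zero.mp h1 with h | h
      · exact Finsupp.mem_support_iff.mp hj h
      · exact hwne h
    have husurj : ∀ y : ι →₀ F, ∃ v, u v = y := by
      intro y
      obtain ⟨j₀, hj₀⟩ := Finsupp.support_nonempty_iff.mpr hwne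
      have hwj₀ : w j₀ ≠ 0 := Finsupp.mem_support_iff.mp hj₀
      have hxmem : (w j₀)⁻¹ • rko F ι j₀ y ∈ finitaryMat F ι :=
        Submodule.smul_mem _ _ (rko_mem F ι j₀ y)
      have hxw : ((w j₀)⁻¹ • rko F ι j₀ y) w = y := by
        rw [LinearMap.smul_apply, rko_apply, smul_smul, inv_mul_cancel₀ hwj₀, one_smul]
      set x' := f.symm ⟨(w j₀)⁻¹ • rko F ι j₀ y, hxmem⟩ with hx'def
      refine ⟨(x' : Module.End F (ι →₀ F)) (Finsupp.single i₀ 1), ?_⟩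
      have h2 := hint (x' : Module.End F (ι →₀ F)) x'.2 (Finsupp.single i₀ 1)
      rw [← h2, hui₀]
      have h3 : f ⟨(x' : Module.End F (ι →₀ F)), x'.2⟩
          = ⟨(w j₀)⁻¹ • rko F ι j₀ y, hxmem⟩ := by
        rw [hx'def]
        exact f.apply_symm_apply _
      rw [h3]
      exact hxw
    have huinj' : Function.Injective u := by
      intro a' b' hab
      have := huinj (a' - b') (by rw [map_sub, hab, sub_self])
      exact sub_eq_zero.mp this
    set uE : (ι →₀ F) ≃ₗ[F] (ι →₀ F) :=
      LinearEquiv.ofBijective u ⟨huinj', fun y => husurj y⟩ with huEdef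
    have huE : ∀ v, uE v = u v := fun v => rfl
    have hwne' : ∀ i : ι, u (Finsupp.single i 1) ≠ 0 := fun i h0 =>
      one_ne_zero (Finsupp.single_eq_zero.mp (huinj _ h0))
    have hhom : ∀ i : ι, ∃ h : G,
        u (Finsupp.single i 1) ∈ Finsupp.supported F F (τ' ⁻¹' {h}) := by
      intro i
      set qi : Module.End F (ι →₀ F) :=
        (f ⟨Eij F ι i i, Eij_mem_finitary F ι i i⟩ : Module.End F (ι →₀ F)) with hqidef
      have hqic : qi ∈ finElemComp F ι τ' 1 := by
        apply hmem
        have h4 := Eij_mem_comp F ι τ i i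
        rwa [inv_mul_cancel] at h4
      have hrank : ∀ v : ι →₀ F, ∃ c : F, qi v = c • u (Finsupp.single i 1) := by
        intro v
        obtain ⟨v', hv'⟩ := husurj v
        refine ⟨v' i, ?_⟩
        rw [← hv', hqidef, hint _ (Eij_mem_finitary F ι i i), Eij_apply, hus]
      have hfix : qi (u (Finsupp.single i 1)) = u (Finsupp.single i 1) := by
        rw [hqidef, hint _ (Eij_mem_finitary F ι i i), Eij_apply, Finsupp.single_eq_same]
      set wi := u (Finsupp.single i 1) with hwidef
      have hsum : wi = ∑ j ∈ wi.support, qi (Finsupp.single j (wi j)) := by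
        have h4 : qi wi = ∑ j ∈ wi.support, qi (Finsupp.single j (wi j)) := by
          conv_lhs => rw [← Finsupp.sum_single wi]
          rw [Finsupp.sum, map_sum]
        rw [← h4, hfix]
      choose c hc using fun j : ι => hrank (Finsupp.single j (wi j))
      have hsum2 : (∑ j ∈ wi.support, c j) • wi = wi := by
        rw [Finset.sum_smul]
        conv_rhs => rw [hsum]
        exact Finset.sum_congr rfl fun j _ => (hc j).symm
      have hone : (∑ j ∈ wi.support, c j) = 1 := by
        by_contra hne1
        have h5 : ((∑ j ∈ wi.support, c j) - 1) • wi = 0 := by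
          rw [sub_smul, one_smul, hsum2, sub_self]
        rcases smul_eq_zero.mp h5 with h | h
        · exact hne1 (sub_eq_zero.mp h)
        · exact hwne' i h
      obtain ⟨j, hjmem, hcj⟩ : ∃ j ∈ wi.support, c j ≠ 0 := by
        by_contra hall
        push_neg at hall
        rw [Finset.sum_eq_zero hall] at hone
        exact zero_ne_one hone
      refine ⟨τ' j, ?_⟩
      have h5 : qi (Finsupp.single j (wi j))
          ∈ Finsupp.supported F F (τ' ⁻¹' {τ' j * (1:G)⁻¹}) := by
        apply comp_apply_mem F ι hqic
        exact Finsupp.single_mem_supported F _ rfl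
      rw [inv_one, mul_one, hc j] at h5
      have h6 : wi = (c j)⁻¹ • (c j • wi) := by
        rw [smul_smul, inv_mul_cancel₀ hcj, one_smul]
      rw [h6]
      exact Submodule.smul_mem _ _ h5
    choose ρ hρ using hhom
    have hcoh : ∀ i : ι, ρ i = ρ i₀ * (τ i₀)⁻¹ * τ i := by
      intro i
      have h1 : (f ⟨Eij F ι i i₀, Eij_mem_finitary F ι i i₀⟩ : Module.End F (ι →₀ F))
          (u (Finsupp.single i₀ 1)) = u (Finsupp.single i 1) := by
        rw [hint _ (Eij_mem_finitary F ι i i₀), Eij_apply, Finsupp.single_eq_same]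
      have h2 : (f ⟨Eij F ι i i₀, Eij_mem_finitary F ι i i₀⟩ : Module.End F (ι →₀ F))
          ∈ finElemComp F ι τ' ((τ i)⁻¹ * τ i₀) :=
        hmem _ _ _ (Eij_mem_comp F ι τ i i₀)
      have h3 : u (Finsupp.single i 1)
          ∈ Finsupp.supported F F (τ' ⁻¹' {ρ i₀ * ((τ i)⁻¹ * τ i₀)⁻¹}) := by
        rw [← h1]
        exact comp_apply_mem F ι h2 (ρ i₀) (hρ i₀)
      by_contra hne
      apply hwne' i
      refine supported_eq_zero F ι τ' ?_ (hρ i) h3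
      intro he
      apply hne
      rw [he]; group
    set g₀ : G := ρ i₀ * (τ i₀)⁻¹ with hg₀def
    have hρg : ∀ i, ρ i = g₀ * τ i := fun i => by rw [hcoh i, hg₀def]
    have hc3 : ∀ (g : G) (v : ι →₀ F), v ∈ Finsupp.supported F F (τ ⁻¹' {g}) →
        u v ∈ Finsupp.supported F F (τ' ⁻¹' {g₀ * g}) := by
      intro g v hv
      rw [Finsupp.supported_eq_span_single] at hv
      induction hv using Submodule.span_induction with
      | mem y hy =>
          obtain ⟨i, hi, rfl⟩ := hy
          have hig : τ i = g := hi
          have h7 := hρ i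
          rw [hρg i, hig] at h7
          exact h7
      | zero => rw [map_zero]; exact Submodule.zero_mem _
      | add a' b' _ _ ha' hb' => rw [map_add]; exact add_mem ha' hb'
      | smul cc a' _ ha' => rw [map_smul]; exact Submodule.smul_mem _ _ ha'
    have hc4 : ∀ (h : G) (v' : ι →₀ F), v' ∈ Finsupp.supported F F (τ' ⁻¹' {h}) →
        uE.symm v' ∈ Finsupp.supported F F (τ ⁻¹' {g₀⁻¹ * h}) := by
      intro h v' hv'
      set v : ι →₀ F := uE.symm v' with hvdef
      have huv : u v = v' := by rw [← huE, hvdef, uE.apply_symm_apply]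
      set p : ι → Prop := fun j => τ j = g₀⁻¹ * h with hpdef
      set v₁ := v.filter p with hv₁def
      set v₂ := v.filter (fun j => ¬ p j) with hv₂def
      have hsplit : v₁ + v₂ = v := Finsupp.filter_pos_add_filter_neg v p
      have hv₁mem : v₁ ∈ Finsupp.supported F F (τ ⁻¹' {g₀⁻¹ * h}) := by
        rw [Finsupp.mem_supported']
        intro k hk
        rw [hv₁def]
        exact Finsupp.filter_apply_neg p v hk
      have hu₁ : u v₁ ∈ Finsupp.supported F F (τ' ⁻¹' {h}) := by
        have h8 := hc3 (g₀⁻¹ * h) v₁ hv₁mem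
        rwa [mul_inv_cancel_left] at h8
      have hu₂a : u v₂ ∈ Finsupp.supported F F (τ' ⁻¹' {h}) := by
        have h8 : u v₂ = v' - u v₁ := by
          rw [← huv, ← hsplit, map_add]; abel
        rw [h8]
        exact sub_mem hv' hu₁
      have hu₂b : u v₂ ∈ Finsupp.supported F F ((τ' ⁻¹' {h})ᶜ) := by
        have h9 : u v₂ = ∑ j ∈ v₂.support, u (Finsupp.single j (v₂ j)) := by
          conv_lhs => rw [← Finsupp.sum_single v₂]
          rw [Finsupp.sum, map_sum]
        rw [h9]
        refine Submodule.sum_mem _ fun j hj => ?_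
        have hnpj : ¬ p j := by
          intro hpj
          have h10 : v₂ j = 0 := by
            rw [hv₂def]
            exact Finsupp.filter_apply_neg _ v (fun hnn => hnn hpj)
          exact Finsupp.mem_support_iff.mp hj h10
        rw [hus]
        refine Submodule.smul_mem _ _ (Finsupp.supported_mono ?_ (hρ j))
        intro k hk hk2
        have e1 : τ' k = ρ j := hk
        have e2 : τ' k = h := hk2
        apply hnpj
        show τ j = g₀⁻¹ * h
        have e3 : g₀ * τ j = h := by rw [← hρg j, ← e1, e2]
        rw [← e3]; group
      have hzero : u v₂ = 0 := by
        rw [Finsupp.mem_supported] at hu₂a hu₂b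
        rw [← Finsupp.support_eq_empty]
        exact Finset.eq_empty_of_forall_notMem fun k hk => (hu₂b hk) (hu₂a hk)
      have hv₂0 : v₂ = 0 := huinj _ hzero
      have hveq : v = v₁ := by rw [← hsplit, hv₂0, add_zero]
      rw [hveq]
      exact hv₁mem
    refine ⟨g₀, fun g => ?_⟩
    have hmap : (Finsupp.supported F F (τ ⁻¹' {g})).map
        (uE : (ι →₀ F) →ₗ[F] (ι →₀ F)) = Finsupp.supported F F (τ' ⁻¹' {g₀ * g}) := by
      apply le_antisymm
      · rintro _ ⟨v, hv, rfl⟩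
        exact hc3 g v hv
      · intro v' hv'
        refine ⟨uE.symm v', ?_, uE.apply_symm_apply v'⟩
        have h8 := hc4 (g₀ * g) v' hv'
        rwa [inv_mul_cancel_left] at h8
    have beq : ((τ ⁻¹' {g}) →₀ F) ≃ₗ[F] ((τ' ⁻¹' {g₀ * g}) →₀ F) :=
      (Finsupp.supportedEquivFinsupp (M := F) (R := F) (τ ⁻¹' {g})).symm ≪≫ₗ
        (LinearEquiv.ofSubmodules uE _ _ hmap) ≪≫ₗ
        (Finsupp.supportedEquivFinsupp (M := F) (R := F) (τ' ⁻¹' {g₀ * g}))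
    have hl := mk_eq_mk_of_basis ((Finsupp.basisSingleOne (R := F)
        (ι := (τ ⁻¹' {g}))).map beq) (Finsupp.basisSingleOne (R := F) (ι := (τ' ⁻¹' {g₀ * g})))
    exact encard_eq_of_mk_eq (Cardinal.lift_injective hl)

  · rintro ⟨g₀, hcard⟩
    -- construct a bijection π with τ' (π i) = g₀ * τ i
    have hfib : ∀ c : G, Nonempty ((τ ⁻¹' {c}) ≃ ((fun i => g₀⁻¹ * τ' i) ⁻¹' {c})) := by
      intro c
      have heq : ((fun i => g₀⁻¹ * τ' i) ⁻¹' {c}) = τ' ⁻¹' {g₀ * c} := by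
        ext i
        simp only [Set.mem_preimage, Set.mem_singleton_iff, inv_mul_eq_iff_eq_mul,
          eq_inv_mul_iff_mul_eq]
      rw [heq]
      have := mk_eq_of_encard_eq (hcard c)
      exact Cardinal.eq.mp this
    let e : ∀ c : G, (τ ⁻¹' {c}) ≃ ((fun i => g₀⁻¹ * τ' i) ⁻¹' {c}) :=
      fun c => (hfib c).some
    let π : ι ≃ ι := Equiv.ofFiberEquiv e
    have hπ : ∀ i, τ' (π i) = g₀ * τ i := by
      intro i
      have h2 : g₀⁻¹ * τ' (π i) = τ i := Equiv.ofFiberEquiv_map e i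
      rw [← h2]
      group
    set E : (ι →₀ F) ≃ₗ[F] (ι →₀ F) := (Finsupp.domLCongr π : (ι →₀ F) ≃ₗ[F] (ι →₀ F))
    refine ⟨LinearEquiv.ofSubmodules E.conj _ _ (conj_map_finitary F ι π), ?_, ?_⟩
    · intro x y
      have hco : ∀ z : finitaryMat F ι,
          ((LinearEquiv.ofSubmodules E.conj _ _ (conj_map_finitary F ι π)) z :
            Module.End F (ι →₀ F)) = E.conj (z : Module.End F (ι →₀ F)) := fun z => rfl
      rw [hco, hco, hco]
      exact conj_mul' F E _ _
    · intro g
      have hco : ∀ z : finitaryMat F ι,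
          ((LinearEquiv.ofSubmodules E.conj _ _ (conj_map_finitary F ι π)) z :
            Module.End F (ι →₀ F)) = E.conj (z : Module.End F (ι →₀ F)) := fun z => rfl
      ext y
      simp only [Set.mem_image, Set.mem_setOf_eq]
      constructor
      · rintro ⟨x, hx, rfl⟩
        rw [hco]
        rw [← conj_map_comp F ι τ τ' π g₀ hπ g]
        exact Submodule.mem_map_of_mem hx
      · intro hy
        rw [← conj_map_comp F ι τ τ' π g₀ hπ g] at hy
        obtain ⟨z, hz, hze⟩ := hy
        refine ⟨⟨z, comp_le_finitary F ι τ g hz⟩, hz, ?_⟩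
        apply Subtype.ext
        rw [hco]
        exact hze
end
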